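/- Let p be a prime of a number field F with completion F_p, ring of integers O_p, and uniformizer ϖ. Let K_0 ⊂ GL_2(O_p) be the subgroup of matrices with lower-left entry in ϖO_p, let A = (0 1; ϖ 0), and let K* be the group generated by K_0, A, and the center Z(F_p). Then any g = (a b; c d) ∈ GL_2(F_p) can be written as g = (y x; 0 1)·k with y ∈ F_p^×, x ∈ F_p, k ∈ K*; in any such decomposition, |y|_p equals |(ad−bc)/gcd(c,d)²|_p if |c|_p < |d|_p, and |ϖ·(ad−bc)/gcd(c,d)²|_p if |c|_p ≥ |d|_p, where gcd(c,d) generates the ideal cO_p + dO_p. Moreover, the coset of k in K*/(Z(F_p)K_0) is determined by g: it is trivial iff |c|_p < |d|_p. -/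

import Mathlib

open Matrix

variable {K : Type*} [Field K]

/-- The `GL₂` elements whose matrix lies in the Iwahori-type subgroup `K₀`: integral
entries, unit determinant, and lower-left entry divisible by the uniformizer `ϖ`. -/
def iwahoriSet (val : Valuation K (WithZero (Multiplicative ℤ))) (ϖ : K) :
    Set (GL (Fin 2) K) :=
  {g | (∀ i j, val ((g : Matrix (Fin 2) (Fin 2) K) i j) ≤ 1) ∧
    val ((g : Matrix (Fin 2) (Fin 2) K).det) = 1 ∧
    val ((g : Matrix (Fin 2) (Fin 2) K) 1 0) ≤ val ϖ}

/-- The nonzero scalar matrices in `GL₂(K)`, i.e. the center `Z(K)`. -/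
def scalarSet (K : Type*) [Field K] : Set (GL (Fin 2) K) :=
  {g | ∃ u : K, u ≠ 0 ∧ (g : Matrix (Fin 2) (Fin 2) K) = u • (1 : Matrix (Fin 2) (Fin 2) K)}

/-- The subgroup `Z(K)·K₀` of `GL₂(K)`. -/
def ZK0 (val : Valuation K (WithZero (Multiplicative ℤ))) (ϖ : K) : Subgroup (GL (Fin 2) K) :=
  Subgroup.closure (scalarSet K ∪ iwahoriSet val ϖ)

/-- The group `K*` generated by `Z(K)`, `K₀` and the Atkin–Lehner element `A`. -/
def KstarGroup (val : Valuation K (WithZero (Multiplicative ℤ))) (ϖ : K)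
    (A : GL (Fin 2) K) : Subgroup (GL (Fin 2) K) :=
  Subgroup.closure (scalarSet K ∪ iwahoriSet val ϖ ∪ {A})


/-!
Scalars are central, `A` normalizes `Z·K₀` and `A² = ϖ·1 ∈ Z`, so `K* = Z·K₀ ∪ Z·K₀·A`.
For `k = u • m` with `m ∈ K₀` the unit diagonal entry of `m` gives `|k₁₀| ≤ |ϖ|·|k₁₁| < |k₁₁|`
and `|det k| = |k₁₁|²`; right multiplication by `A` turns the bottom row `(c, d)` into
`(ϖ d, c)`, and since the value group is `ℤ` this gives `|k₁₁| ≤ |k₁₀|` and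
`|det k| = |k₁₀|² / |ϖ|` on the other coset. In `g = (y x; 0 1)·k` the matrices `g` and `k` share
their bottom row and `det g = y · det k`, which yields `|y|` and the coset of `k`. For existence
take `k = d • (1 0; c/d 1)` if `|c| < |d|`, and `k = (c/ϖ) • (1 0; dϖ/c 1) · A` otherwise.
-/

section IwahoriMatrix

variable {Γ₀ : Type*} [LinearOrderedCommGroupWithZero Γ₀] {v : Valuation K Γ₀} {ϖ : K}

def IsIwahoriMatrix (v : Valuation K Γ₀) (ϖ : K) (m : Matrix (Fin 2) (Fin 2) K) : Prop :=
  (∀ i j, v (m i j) ≤ 1) ∧ v m.det = 1 ∧ v (m 1 0) ≤ v ϖ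

namespace IsIwahoriMatrix

theorem one : IsIwahoriMatrix v ϖ 1 := by
  refine ⟨fun i j => ?_, by simp, by simp⟩
  rcases eq_or_ne i j with rfl | h <;> simp [one_apply, *]

theorem mul {m n : Matrix (Fin 2) (Fin 2) K} (hm : IsIwahoriMatrix v ϖ m)
    (hn : IsIwahoriMatrix v ϖ n) : IsIwahoriMatrix v ϖ (m * n) := by
  obtain ⟨hm, hmdet, hm10⟩ := hm
  obtain ⟨hn, hndet, hn10⟩ := hn
  have entry : ∀ i j, (m * n) i j = m i 0 * n 0 j + m i 1 * n 1 j := by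
    simp [mul_apply, Fin.sum_univ_two]
  refine ⟨fun i j => ?_, by rw [det_mul, map_mul, hmdet, hndet, one_mul], ?_⟩
  · rw [entry]
    refine (v.map_add _ _).trans (max_le ?_ ?_) <;> rw [map_mul]
    · exact mul_le_one' (hm i 0) (hn 0 j)
    · exact mul_le_one' (hm i 1) (hn 1 j)
  · rw [entry]
    refine (v.map_add _ _).trans (max_le ?_ ?_) <;> rw [map_mul]
    · simpa using mul_le_mul' hm10 (hn 0 0)
    · simpa using mul_le_mul' (hm 1 1) hn10

theorem inv {m : Matrix (Fin 2) (Fin 2) K} (hm : IsIwahoriMatrix v ϖ m) :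
    IsIwahoriMatrix v ϖ m⁻¹ := by
  obtain ⟨hm, hdet, h10⟩ := hm
  have hinv : m⁻¹ = m.det⁻¹ • !![m 1 1, -m 0 1; -m 1 0, m 0 0] := by
    rw [inv_def, Ring.inverse_eq_inv', adjugate_fin_two]
  refine ⟨fun i j => ?_, ?_, ?_⟩
  · rw [hinv]
    fin_cases i <;> fin_cases j <;> simp [hdet, hm]
  · rw [det_nonsing_inv, Ring.inverse_eq_inv', map_inv₀, hdet, inv_one]
  · simpa [hinv, hdet] using h10

theorem conj_atkinLehner (hϖ0 : ϖ ≠ 0) (hϖ1 : v ϖ ≤ 1) {m : Matrix (Fin 2) (Fin 2) K}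
    (hm : IsIwahoriMatrix v ϖ m) :
    IsIwahoriMatrix v ϖ (!![0, 1; ϖ, 0] * m * !![0, ϖ⁻¹; 1, 0]) := by
  obtain ⟨hm, hdet, h10⟩ := hm
  have hconj : !![0, 1; ϖ, 0] * m * !![0, ϖ⁻¹; 1, 0] =
      !![m 1 1, m 1 0 * ϖ⁻¹; ϖ * m 0 1, m 0 0] := by
    rw [eta_fin_two m]
    ext i j
    fin_cases i <;> fin_cases j <;> simp [mul_comm ϖ, hϖ0]
  have h01 : v (m 1 0 * ϖ⁻¹) ≤ 1 := by
    rw [map_mul, map_inv₀, ← div_eq_mul_inv]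
    exact div_le_one_of_le₀ h10 zero_le
  have h10' : v (ϖ * m 0 1) ≤ v ϖ := by rw [map_mul]; exact mul_le_of_le_one_right' (hm 0 1)
  rw [hconj]
  refine ⟨fun i j => ?_, ?_, by simpa using h10'⟩
  · fin_cases i <;> fin_cases j
    · simpa using hm 1 1
    · simpa using h01
    · simpa using h10'.trans hϖ1
    · simpa using hm 0 0
  · rw [det_fin_two_of, ← hdet, det_fin_two]
    congr 1
    field_simp

theorem val_one_one (hϖ : v ϖ < 1) {m : Matrix (Fin 2) (Fin 2) K}
    (hm : IsIwahoriMatrix v ϖ m) : v (m 1 1) = 1 := by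
  obtain ⟨hm, hdet, h10⟩ := hm
  have hoff : v (m 0 1 * m 1 0) < 1 := by
    rw [map_mul]
    exact (mul_le_of_le_one_of_le (hm 0 1) h10).trans_lt hϖ
  have hdiag : 1 ≤ v (m 0 0) * v (m 1 1) := by
    have hsub := v.map_sub (m 0 0 * m 1 1) (m 0 1 * m 1 0)
    rw [← det_fin_two, hdet, le_max_iff] at hsub
    rw [← map_mul]
    exact hsub.resolve_right hoff.not_ge
  exact eq_one_of_one_le_mul_right (hm 0 0) (hm 1 1) hdiag

end IsIwahoriMatrix

theorem isIwahoriMatrix_lowerUnipotent (hϖ1 : v ϖ ≤ 1) {e : K} (he : v e ≤ v ϖ) :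
    IsIwahoriMatrix v ϖ !![1, 0; e, 1] := by
  refine ⟨fun i j => ?_, by simp [det_fin_two_of], by simpa using he⟩
  fin_cases i <;> fin_cases j <;> simp [he.trans hϖ1]

end IwahoriMatrix

theorem Subgroup.mem_or_mul_inv_mem_of_mem_closure_union_singleton {G : Type*} [Group G]
    {H : Subgroup G} {S : Set G} {a : G} (hS : S ⊆ H) (hconj : ∀ h ∈ H, a * h * a⁻¹ ∈ H)
    (hsq : a * a ∈ H) {k : G} (hk : k ∈ Subgroup.closure (S ∪ {a})) :
    k ∈ H ∨ k * a⁻¹ ∈ H := by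
  induction hk using Subgroup.closure_induction with
  | mem x hx =>
    rcases hx with hx | rfl
    · exact .inl (hS hx)
    · exact .inr (by rw [mul_inv_cancel]; exact H.one_mem)
  | one => exact .inl H.one_mem
  | mul x y _ _ hx hy =>
    rcases hx with hx | hx <;> rcases hy with hy | hy
    · exact .inl (H.mul_mem hx hy)
    · exact .inr (by simpa [mul_assoc] using H.mul_mem hx hy)
    · exact .inr (by simpa [mul_assoc] using H.mul_mem hx (hconj y hy))
    · refine .inl ?_
      have hxy : x * y = x * a⁻¹ * (a * (y * a⁻¹) * a⁻¹) * (a * a) := by group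
      rw [hxy]
      exact H.mul_mem (H.mul_mem hx (hconj _ hy)) hsq
  | inv x _ hx =>
    rcases hx with hx | hx
    · exact .inl (H.inv_mem hx)
    · refine .inr ?_
      have hx' : x⁻¹ * a⁻¹ = (a * a)⁻¹ * (a * (x * a⁻¹)⁻¹ * a⁻¹) := by group
      rw [hx']
      exact H.mul_mem (H.inv_mem hsq) (hconj _ (H.inv_mem hx))

section ScaledIwahori

variable {Γ₀ : Type*} [LinearOrderedCommGroupWithZero Γ₀] {v : Valuation K Γ₀} {ϖ : K}

/-- `Z(K)·K₀` for a general valuation; see `ZK0_eq_scaledIwahori`. -/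
def scaledIwahori (v : Valuation K Γ₀) (ϖ : K) : Subgroup (GL (Fin 2) K) where
  carrier :=
    {k | ∃ u : K, u ≠ 0 ∧ IsIwahoriMatrix v ϖ (u⁻¹ • (k : Matrix (Fin 2) (Fin 2) K))}
  one_mem' := ⟨1, one_ne_zero, by simpa using IsIwahoriMatrix.one⟩
  mul_mem' := by
    rintro k l ⟨u, hu, hk⟩ ⟨w, hw, hl⟩
    refine ⟨u * w, mul_ne_zero hu hw, ?_⟩
    rw [Units.val_mul, mul_inv, ← smul_mul_smul_comm]
    exact hk.mul hl
  inv_mem' := by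
    rintro k ⟨u, hu, hk⟩
    refine ⟨u⁻¹, inv_ne_zero hu, ?_⟩
    have hinv : (u⁻¹ • (k : Matrix (Fin 2) (Fin 2) K))⁻¹ =
        u • ((k⁻¹ : GL (Fin 2) K) : Matrix (Fin 2) (Fin 2) K) := by
      refine inv_eq_left_inv ?_
      rw [smul_mul_smul_comm, mul_inv_cancel₀ hu, one_smul, ← Units.val_mul, inv_mul_cancel,
        Units.val_one]
    rw [inv_inv, ← hinv]
    exact hk.inv

theorem mem_scaledIwahori_of_eq_smul_lowerUnipotent (hϖ1 : v ϖ ≤ 1) {k : GL (Fin 2) K}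
    {u e : K} (hu : u ≠ 0) (he : v e ≤ v ϖ)
    (hk : (k : Matrix (Fin 2) (Fin 2) K) = u • !![1, 0; e, 1]) : k ∈ scaledIwahori v ϖ :=
  ⟨u, hu, by rw [hk, inv_smul_smul₀ hu]; exact isIwahoriMatrix_lowerUnipotent hϖ1 he⟩

theorem val_lt_val_of_mem_scaledIwahori (hϖ : v ϖ < 1) {k : GL (Fin 2) K}
    (hk : k ∈ scaledIwahori v ϖ) :
    v (k 1 0) < v (k 1 1) ∧ v (k : Matrix (Fin 2) (Fin 2) K).det = v (k 1 1) ^ 2 := by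
  obtain ⟨u, hu, hm⟩ := hk
  have hu0 : v u ≠ 0 := v.ne_zero_iff.mpr hu
  have h11 : v (k 1 1) = v u := by
    simpa [map_inv₀, inv_mul_eq_one₀ hu0, eq_comm] using hm.val_one_one hϖ
  have h10 : v (k 1 0) ≤ v u * v ϖ := by
    simpa [inv_mul_le_iff₀ (zero_lt_iff.mpr hu0)] using hm.2.2
  refine ⟨?_, ?_⟩
  · calc v (k 1 0) ≤ v u * v ϖ := h10
      _ < v u := mul_lt_of_lt_one_right (zero_lt_iff.mpr hu0) hϖ
      _ = v (k 1 1) := h11.symm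
  · have hdet := hm.2.1
    rw [det_smul, Fintype.card_fin, map_mul, map_pow, map_inv₀, inv_pow,
      inv_mul_eq_one₀ (pow_ne_zero 2 hu0)] at hdet
    rw [h11, hdet]

theorem coe_inv_eq_of_coe_eq_atkinLehner (hϖ0 : ϖ ≠ 0) {A : GL (Fin 2) K}
    (hA : (A : Matrix (Fin 2) (Fin 2) K) = !![0, 1; ϖ, 0]) :
    ((A⁻¹ : GL (Fin 2) K) : Matrix (Fin 2) (Fin 2) K) = !![0, ϖ⁻¹; 1, 0] := by
  rw [Matrix.coe_units_inv, hA]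
  refine inv_eq_left_inv ?_
  ext i j
  fin_cases i <;> fin_cases j <;> simp [hϖ0]

theorem atkinLehner_conj_mem_scaledIwahori (hϖ0 : ϖ ≠ 0) (hϖ1 : v ϖ ≤ 1) {A : GL (Fin 2) K}
    (hA : (A : Matrix (Fin 2) (Fin 2) K) = !![0, 1; ϖ, 0]) {k : GL (Fin 2) K}
    (hk : k ∈ scaledIwahori v ϖ) : A * k * A⁻¹ ∈ scaledIwahori v ϖ := by
  obtain ⟨u, hu, hm⟩ := hk
  refine ⟨u, hu, ?_⟩
  rw [Units.val_mul, Units.val_mul, hA, coe_inv_eq_of_coe_eq_atkinLehner hϖ0 hA,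
    ← smul_mul, ← Matrix.mul_smul]
  exact hm.conj_atkinLehner hϖ0 hϖ1

theorem atkinLehner_mul_self_mem_scaledIwahori (hϖ0 : ϖ ≠ 0) {A : GL (Fin 2) K}
    (hA : (A : Matrix (Fin 2) (Fin 2) K) = !![0, 1; ϖ, 0]) : A * A ∈ scaledIwahori v ϖ := by
  refine ⟨ϖ, hϖ0, ?_⟩
  have hsq : ϖ⁻¹ • ((A * A : GL (Fin 2) K) : Matrix (Fin 2) (Fin 2) K) = 1 := by
    rw [Units.val_mul, hA]
    ext i j
    fin_cases i <;> fin_cases j <;> simp [hϖ0]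
  rw [hsq]
  exact IsIwahoriMatrix.one

end ScaledIwahori

section Iwasawa

open WithZero GeneralLinearGroup

variable {val : Valuation K ℤᵐ⁰} {ϖ : K}

theorem val_lt_one_of_eq_exp_neg_one (hϖ : val ϖ = exp (-1)) : val ϖ < 1 := by
  rw [hϖ, ← exp_zero, exp_lt_exp]
  exact neg_one_lt_zero

theorem le_val_of_lt_one (hϖ : val ϖ = exp (-1)) {x : ℤᵐ⁰} (hx : x < 1) : x ≤ val ϖ :=
  (lt_mul_exp_iff_le (by simp [hϖ])).1 (by rwa [hϖ, ← exp_add, neg_add_cancel, exp_zero])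

theorem ZK0_eq_scaledIwahori : ZK0 val ϖ = scaledIwahori val ϖ := by
  refine le_antisymm (Subgroup.closure_le _ |>.2 ?_) ?_
  · rintro k (⟨u, hu, hk⟩ | hk)
    · exact ⟨u, hu, by rw [hk, inv_smul_smul₀ hu]; exact IsIwahoriMatrix.one⟩
    · exact ⟨1, one_ne_zero, by rw [inv_one, one_smul]; exact hk⟩
  · rintro k ⟨u, hu, hk⟩
    set z := scalar (Fin 2) (Units.mk0 u hu)
    have hz : z ∈ scalarSet K := ⟨u, hu, by simp [z, smul_one_eq_diagonal]⟩
    have hzk : z⁻¹ * k ∈ iwahoriSet val ϖ := by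
      change IsIwahoriMatrix val ϖ _
      rwa [Units.val_mul, ← map_inv, coe_scalar, Units.val_inv_eq_inv_val, Units.val_mk0,
        scalar_apply, ← smul_eq_diagonal_mul]
    simpa using (ZK0 val ϖ).mul_mem (Subgroup.subset_closure (Or.inl hz))
      (Subgroup.subset_closure (Or.inr hzk))

theorem ZK0_le_KstarGroup (A : GL (Fin 2) K) : ZK0 val ϖ ≤ KstarGroup val ϖ A :=
  Subgroup.closure_mono Set.subset_union_left

theorem mem_ZK0_or_mul_inv_mem_of_mem_KstarGroup (hϖ0 : ϖ ≠ 0) (hϖ1 : val ϖ ≤ 1)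
    {A : GL (Fin 2) K} (hA : (A : Matrix (Fin 2) (Fin 2) K) = !![0, 1; ϖ, 0])
    {k : GL (Fin 2) K} (hk : k ∈ KstarGroup val ϖ A) :
    k ∈ ZK0 val ϖ ∨ k * A⁻¹ ∈ ZK0 val ϖ := by
  rw [ZK0_eq_scaledIwahori]
  refine Subgroup.mem_or_mul_inv_mem_of_mem_closure_union_singleton ?_
    (fun _ => atkinLehner_conj_mem_scaledIwahori hϖ0 hϖ1 hA)
    (atkinLehner_mul_self_mem_scaledIwahori hϖ0 hA) hk
  rw [← ZK0_eq_scaledIwahori]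
  exact Subgroup.subset_closure

theorem val_le_val_of_mul_inv_mem_ZK0 (hϖ : val ϖ = exp (-1)) {A : GL (Fin 2) K}
    (hA : (A : Matrix (Fin 2) (Fin 2) K) = !![0, 1; ϖ, 0]) {k : GL (Fin 2) K}
    (hk : k * A⁻¹ ∈ ZK0 val ϖ) :
    val (k 1 1) ≤ val (k 1 0) ∧
      val (k : Matrix (Fin 2) (Fin 2) K).det = val (k 1 0) ^ 2 / val ϖ := by
  have hϖ0 : val ϖ ≠ 0 := by simp [hϖ]
  set m := k * A⁻¹
  obtain ⟨hlt, hdet⟩ := val_lt_val_of_mem_scaledIwahori (val_lt_one_of_eq_exp_neg_one hϖ)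
    (ZK0_eq_scaledIwahori (val := val) ▸ hk)
  have hkm : (k : Matrix (Fin 2) (Fin 2) K) = m * !![0, 1; ϖ, 0] := by
    rw [← hA, ← Units.val_mul, inv_mul_cancel_right]
  have h10 : k 1 0 = ϖ * m 1 1 := by simp [hkm, mul_apply, Fin.sum_univ_two, mul_comm]
  have h11 : k 1 1 = m 1 0 := by simp [hkm, mul_apply, Fin.sum_univ_two]
  have hdetk :
      (k : Matrix (Fin 2) (Fin 2) K).det = -ϖ * (m : Matrix (Fin 2) (Fin 2) K).det := by
    rw [hkm, det_mul, det_fin_two_of]; ring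
  rw [h10, h11, hdetk, map_mul, map_mul, hdet, Valuation.map_neg]
  refine ⟨?_, ?_⟩
  · rw [← lt_mul_exp_iff_le (by simp [hϖ, (zero_le.trans_lt hlt).ne']), mul_comm, ← mul_assoc]
    simpa [hϖ] using hlt
  · rw [mul_pow, sq (val ϖ), mul_assoc, mul_div_assoc, mul_div_cancel_left₀ _ hϖ0]

theorem mem_ZK0_iff_and_val_det_of_mem_KstarGroup (hϖ : val ϖ = exp (-1)) {A : GL (Fin 2) K}
    (hA : (A : Matrix (Fin 2) (Fin 2) K) = !![0, 1; ϖ, 0]) {k : GL (Fin 2) K}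
    (hk : k ∈ KstarGroup val ϖ A) :
    (k ∈ ZK0 val ϖ ↔ val (k 1 0) < val (k 1 1)) ∧
      val (k : Matrix (Fin 2) (Fin 2) K).det =
        if val (k 1 0) < val (k 1 1) then val (k 1 1) ^ 2 else val (k 1 0) ^ 2 / val ϖ := by
  have hϖ1 := val_lt_one_of_eq_exp_neg_one hϖ
  have hϖ0 : ϖ ≠ 0 := val.ne_zero_iff.1 (hϖ ▸ exp_ne_zero)
  have bottomRow {k} (hk : k ∈ ZK0 val ϖ) :=
    val_lt_val_of_mem_scaledIwahori hϖ1 (ZK0_eq_scaledIwahori (val := val) ▸ hk)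
  rcases mem_ZK0_or_mul_inv_mem_of_mem_KstarGroup hϖ0 hϖ1.le hA hk with hk | hk
  · obtain ⟨hlt, hdet⟩ := bottomRow hk
    exact ⟨iff_of_true hk hlt, by rw [if_pos hlt, hdet]⟩
  · obtain ⟨hle, hdet⟩ := val_le_val_of_mul_inv_mem_ZK0 hϖ hA hk
    have hnlt := hle.not_gt
    exact ⟨iff_of_false (fun hk' => hnlt (bottomRow hk').1) hnlt, by rw [if_neg hnlt, hdet]⟩

theorem exists_eq_upper_mul_mem_ZK0_of_val_lt (hϖ : val ϖ = exp (-1)) {a b c d : K}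
    (hdet : a * d - b * c ≠ 0) (hcd : val c < val d) :
    ∃ (y x : K) (k : GL (Fin 2) K), y ≠ 0 ∧ k ∈ ZK0 val ϖ ∧
      !![a, b; c, d] = !![y, x; 0, 1] * (k : Matrix (Fin 2) (Fin 2) K) := by
  have hd : d ≠ 0 := val.ne_zero_iff.1 (zero_le.trans_lt hcd).ne'
  have he : val (c / d) ≤ val ϖ := by
    refine le_val_of_lt_one hϖ ?_
    rwa [map_div₀, div_lt_one₀ (zero_le.trans_lt hcd)]
  have hk : (d • !![1, 0; c / d, 1]).det ≠ 0 := by simp [det_fin_two_of, hd]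
  refine ⟨(a * d - b * c) / d ^ 2, b / d, mkOfDetNeZero _ hk, by simp [hdet, hd], ?_, ?_⟩
  · rw [ZK0_eq_scaledIwahori]
    exact mem_scaledIwahori_of_eq_smul_lowerUnipotent (val_lt_one_of_eq_exp_neg_one hϖ).le hd
      he rfl
  · ext i j
    fin_cases i <;> fin_cases j <;> simp [mul_apply, Fin.sum_univ_two] <;> field_simp
    ring

theorem exists_eq_upper_mul_mem_KstarGroup_of_val_le (hϖ : val ϖ = exp (-1))
    {A : GL (Fin 2) K} (hA : (A : Matrix (Fin 2) (Fin 2) K) = !![0, 1; ϖ, 0]) {a b c d : K}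
    (hdet : a * d - b * c ≠ 0) (hdc : val d ≤ val c) :
    ∃ (y x : K) (k : GL (Fin 2) K), y ≠ 0 ∧ k ∈ KstarGroup val ϖ A ∧
      !![a, b; c, d] = !![y, x; 0, 1] * (k : Matrix (Fin 2) (Fin 2) K) := by
  have hϖ0 : ϖ ≠ 0 := val.ne_zero_iff.1 (hϖ ▸ exp_ne_zero)
  have hc : c ≠ 0 := by
    rintro rfl
    obtain rfl : d = 0 := by simpa using hdc
    simp at hdet
  have he : val (d * ϖ / c) ≤ val ϖ := by
    rw [map_div₀, map_mul, div_le_iff₀ (zero_lt_iff.2 (val.ne_zero_iff.2 hc)),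
      mul_comm (val ϖ)]
    exact mul_le_mul_left hdc _
  have hm : ((c / ϖ) • !![1, 0; d * ϖ / c, 1]).det ≠ 0 := by simp [det_fin_two_of, hc, hϖ0]
  refine ⟨-(ϖ * (a * d - b * c)) / c ^ 2, a / c, mkOfDetNeZero _ hm * A,
    by simp [hdet, hc, hϖ0], ?_, ?_⟩
  · refine Subgroup.mul_mem _ (ZK0_le_KstarGroup A ?_) (Subgroup.subset_closure (Or.inr rfl))
    rw [ZK0_eq_scaledIwahori]
    exact mem_scaledIwahori_of_eq_smul_lowerUnipotent (val_lt_one_of_eq_exp_neg_one hϖ).le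
      (div_ne_zero hc hϖ0) he rfl
  · rw [Units.val_mul, val_mkOfDetNeZero, hA]
    ext i j
    fin_cases i <;> fin_cases j <;> simp [mul_apply, Fin.sum_univ_two] <;> field_simp
    ring

theorem exists_eq_upper_mul_mem_KstarGroup (hϖ : val ϖ = exp (-1)) {A : GL (Fin 2) K}
    (hA : (A : Matrix (Fin 2) (Fin 2) K) = !![0, 1; ϖ, 0]) {a b c d : K}
    (hdet : a * d - b * c ≠ 0) :
    ∃ (y x : K) (k : GL (Fin 2) K), y ≠ 0 ∧ k ∈ KstarGroup val ϖ A ∧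
      !![a, b; c, d] = !![y, x; 0, 1] * (k : Matrix (Fin 2) (Fin 2) K) := by
  by_cases hcd : val c < val d
  · obtain ⟨y, x, k, hy, hk, hgk⟩ := exists_eq_upper_mul_mem_ZK0_of_val_lt hϖ hdet hcd
    exact ⟨y, x, k, hy, ZK0_le_KstarGroup A hk, hgk⟩
  · exact exists_eq_upper_mul_mem_KstarGroup_of_val_le hϖ hA hdet (not_lt.1 hcd)

theorem val_eq_and_mem_ZK0_iff_of_eq_upper_mul (hϖ : val ϖ = exp (-1)) {A : GL (Fin 2) K}
    (hA : (A : Matrix (Fin 2) (Fin 2) K) = !![0, 1; ϖ, 0]) {a b c d y x : K}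
    {k : GL (Fin 2) K} (hk : k ∈ KstarGroup val ϖ A)
    (hgk : !![a, b; c, d] = !![y, x; 0, 1] * (k : Matrix (Fin 2) (Fin 2) K)) :
    (val y = if val c < val d
        then val (a * d - b * c) / (max (val c) (val d)) ^ 2
        else val (ϖ * (a * d - b * c)) / (max (val c) (val d)) ^ 2) ∧
      (k ∈ ZK0 val ϖ ↔ val c < val d) := by
  have h10 : k 1 0 = c := by simpa [mul_apply, Fin.sum_univ_two] using (congr_fun₂ hgk 1 0).symm
  have h11 : k 1 1 = d := by simpa [mul_apply, Fin.sum_univ_two] using (congr_fun₂ hgk 1 1).symm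
  have hdetg : a * d - b * c = y * (k : Matrix (Fin 2) (Fin 2) K).det := by
    have h := congrArg Matrix.det hgk
    rwa [det_mul, det_fin_two_of, det_fin_two_of, mul_one, mul_zero, sub_zero] at h
  obtain ⟨hmem, hdetk⟩ := mem_ZK0_iff_and_val_det_of_mem_KstarGroup hϖ hA hk
  rw [h10, h11] at hmem hdetk
  refine ⟨?_, hmem⟩
  split_ifs at hdetk ⊢ with hcd
  · have hd0 : val d ≠ 0 := (zero_le.trans_lt hcd).ne'
    rw [max_eq_right hcd.le, hdetg, map_mul, hdetk]
    field_simp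
  · have hϖ0 : val ϖ ≠ 0 := by simp [hϖ]
    have hc0 : val c ≠ 0 := by
      intro hc
      apply val.ne_zero_iff.2 k.det_ne_zero
      rw [hdetk, hc, zero_pow two_ne_zero, zero_div]
    rw [max_eq_left (not_lt.1 hcd), hdetg, map_mul, map_mul, hdetk]
    field_simp

end Iwasawa

theorem iwasawa_decomposition_nonarchimedean_general
    (val : Valuation K (WithZero (Multiplicative ℤ)))
    (ϖ : K) (hϖ : val ϖ = ((Multiplicative.ofAdd (-1 : ℤ) : Multiplicative ℤ) :
      WithZero (Multiplicative ℤ)))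
    (A : GL (Fin 2) K) (hA : (A : Matrix (Fin 2) (Fin 2) K) = !![0, 1; ϖ, 0])
    (g : GL (Fin 2) K) (a b c d : K)
    (hg : (g : Matrix (Fin 2) (Fin 2) K) = !![a, b; c, d]) :
    (∃ (y x : K) (k : GL (Fin 2) K), y ≠ 0 ∧ k ∈ KstarGroup val ϖ A ∧
      (g : Matrix (Fin 2) (Fin 2) K) = !![y, x; 0, 1] * (k : Matrix (Fin 2) (Fin 2) K)) ∧
    (∀ (y x : K) (k : GL (Fin 2) K), k ∈ KstarGroup val ϖ A →
      (g : Matrix (Fin 2) (Fin 2) K) = !![y, x; 0, 1] * (k : Matrix (Fin 2) (Fin 2) K) →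
      (val y = if val c < val d
          then val (a * d - b * c) / (max (val c) (val d)) ^ 2
          else val (ϖ * (a * d - b * c)) / (max (val c) (val d)) ^ 2) ∧
      (k ∈ ZK0 val ϖ ↔ val c < val d)) := by
  have hdet : a * d - b * c ≠ 0 := by
    rw [← det_fin_two_of, ← hg]
    exact g.det_ne_zero
  rw [hg]
  exact ⟨exists_eq_upper_mul_mem_KstarGroup hϖ hA hdet,
    fun y x k hk hgk => val_eq_and_mem_ZK0_iff_of_eq_upper_mul hϖ hA hk hgk⟩

/-- (Non-archimedean Iwasawa decomposition modulo Atkin–Lehner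
operators, Lemma 2.) Over a non-archimedean local field `K` with normalized valuation
`val`, uniformizer `ϖ`, Iwahori subgroup `K₀` and Atkin–Lehner element `A = (0 1; ϖ 0)`,
every `g = (a b; c d) ∈ GL₂(K)` decomposes as `g = (y x; 0 1)·k` with `k ∈ K*`; in any
such decomposition `|y|` equals `|(ad-bc)/gcd(c,d)²|` if `|c| < |d|` and
`|ϖ(ad-bc)/gcd(c,d)²|` if `|c| ≥ |d|` (here `|gcd(c,d)| = max(|c|,|d|)`), and the coset of
`k` in `K*/(Z(K)K₀)` is trivial iff `|c| < |d|`. -/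
theorem iwasawa_decomposition_nonarchimedean
    (val : Valuation K (WithZero (Multiplicative ℤ))) (hsurj : Function.Surjective val)
    (ϖ : K) (hϖ : val ϖ = ((Multiplicative.ofAdd (-1 : ℤ) : Multiplicative ℤ) :
      WithZero (Multiplicative ℤ)))
    (A : GL (Fin 2) K) (hA : (A : Matrix (Fin 2) (Fin 2) K) = !![0, 1; ϖ, 0])
    (g : GL (Fin 2) K) (a b c d : K)
    (hg : (g : Matrix (Fin 2) (Fin 2) K) = !![a, b; c, d]) :
    (∃ (y x : K) (k : GL (Fin 2) K), y ≠ 0 ∧ k ∈ KstarGroup val ϖ A ∧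
      (g : Matrix (Fin 2) (Fin 2) K) = !![y, x; 0, 1] * (k : Matrix (Fin 2) (Fin 2) K)) ∧
    (∀ (y x : K) (k : GL (Fin 2) K), k ∈ KstarGroup val ϖ A →
      (g : Matrix (Fin 2) (Fin 2) K) = !![y, x; 0, 1] * (k : Matrix (Fin 2) (Fin 2) K) →
      (val y = if val c < val d
          then val (a * d - b * c) / (max (val c) (val d)) ^ 2
          else val (ϖ * (a * d - b * c)) / (max (val c) (val d)) ^ 2) ∧
      (k ∈ ZK0 val ϖ ↔ val c < val d)) :=
  iwasawa_decomposition_nonarchimedean_general val ϖ hϖ A hA g a b c d hg
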